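/- Let n ≥ 3, let G_n be the straight linear 2-tree on n vertices, and let m = n − 2. Then the resistance distance between the extreme vertices 1 and n satisfies r_{G_n}(1, n) = (m+1)/5 + 4·F_{m+1} / (5·L_{m+1}). -/

import Mathlib

/-- The straight linear 2-tree on `n` vertices: vertices `0, …, n-1` (representing
`1, …, n`), with distinct vertices adjacent iff they differ by at most 2. -/
def linear2Tree (n : ℕ) : SimpleGraph (Fin n) where
  Adj i j := i ≠ j ∧ i.val ≤ j.val + 2 ∧ j.val ≤ i.val + 2
  symm := by
    constructor
    intro i j h
    exact ⟨h.1.symm, h.2.2, h.2.1⟩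
  loopless := by
    constructor
    intro i h
    exact h.1 rfl

open scoped Classical in
/-- The combinatorial Laplacian (degree matrix minus adjacency matrix) of a graph on `Fin n`. -/
noncomputable def lap {n : ℕ} (G : SimpleGraph (Fin n)) : Matrix (Fin n) (Fin n) ℝ :=
  Matrix.of fun a b =>
    if a = b then ∑ c : Fin n, (if G.Adj a c then (1 : ℝ) else 0)
    else if G.Adj a b then -1 else 0

/-- The source vector `e_i - e_j`. -/
def esrc {n : ℕ} (i j : Fin n) : Fin n → ℝ :=
  fun t => (if t = i then 1 else 0) - (if t = j then 1 else 0)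

/-- `IsResistance G i j r` says: a solution `v` of `L v = e_i - e_j` exists, and every such
solution satisfies `r = v i - v j`; i.e. the resistance distance between `i` and `j` is `r`. -/
def IsResistance {n : ℕ} (G : SimpleGraph (Fin n)) (i j : Fin n) (r : ℝ) : Prop :=
  (∃ v : Fin n → ℝ, (lap G).mulVec v = esrc i j) ∧
  ∀ v : Fin n → ℝ, (lap G).mulVec v = esrc i j → r = v i - v j

/-- Fibonacci numbers extended to integer indices, with `F_{-p} = (-1)^{p+1} F_p`. -/
def fibZ (k : ℤ) : ℤ :=
  if 0 ≤ k then (Nat.fib k.toNat : ℤ)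
  else (-1) ^ ((-k).toNat + 1) * (Nat.fib (-k).toNat : ℤ)

/-- The Lucas numbers: `L_0 = 2`, `L_1 = 1`, `L_{n+2} = L_{n+1} + L_n`. -/
def lucas : ℕ → ℕ
  | 0 => 2
  | 1 => 1
  | n + 2 => lucas (n + 1) + lucas n

lemma fibZ_natCast (k : ℕ) : fibZ (k : ℤ) = Nat.fib k := by simp [fibZ]

lemma fibZ_neg_natCast (k : ℕ) : fibZ (-(k : ℤ)) = (-1)^(k+1) * Nat.fib k := by
  rcases Nat.eq_zero_or_pos k with h | h
  · subst h; simp [fibZ]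
  · rw [fibZ, if_neg (by omega)]
    simp

lemma fibZ_add_two' (a : ℤ) : fibZ (a + 2) = fibZ (a + 1) + fibZ a := by
  rcases le_or_gt 0 a with h | h
  · obtain ⟨k, rfl⟩ := Int.eq_ofNat_of_zero_le h
    rw [show (k:ℤ)+2 = ((k+2:ℕ):ℤ) by push_cast; ring,
        show (k:ℤ)+1 = ((k+1:ℕ):ℤ) by push_cast; ring,
        fibZ_natCast, fibZ_natCast, fibZ_natCast]
    push_cast [Nat.fib_add_two]; ring
  · rcases eq_or_lt_of_le (show a ≤ -1 by omega) with h1 | h1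
    · subst h1; decide
    rcases eq_or_lt_of_le (show a ≤ -2 by omega) with h2 | h2
    · subst h2; decide
    · obtain ⟨k, hk⟩ : ∃ k : ℕ, a = -((k:ℤ)+3) := ⟨(-a-3).toNat, by omega⟩
      subst hk
      rw [show -((k:ℤ)+3)+2 = -((k+1:ℕ):ℤ) by push_cast; ring,
          show -((k:ℤ)+3)+1 = -((k+2:ℕ):ℤ) by push_cast; ring,
          show -((k:ℤ)+3) = -((k+3:ℕ):ℤ) by push_cast; ring,
          fibZ_neg_natCast, fibZ_neg_natCast, fibZ_neg_natCast]
      have hf : Nat.fib (k+3) = Nat.fib (k+2) + Nat.fib (k+1) := by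
        rw [show k+3 = (k+1)+2 by ring, Nat.fib_add_two]; ring
      rw [hf]
      push_cast
      rw [pow_succ, pow_succ, pow_succ, pow_succ]
      ring

lemma fibZ_rec (a b c : ℤ) (h1 : b = a + 1) (h2 : c = a + 2) : fibZ c = fibZ b + fibZ a := by
  subst h1 h2; exact fibZ_add_two' a

lemma lucas_pos (k : ℕ) : 0 < lucas k := by
  induction k using Nat.strong_induction_on with
  | _ k ih =>
    match k with
    | 0 => decide
    | 1 => decide
    | (k+2) =>
      rw [lucas]
      have h1 := ih (k+1) (by omega)
      omega

lemma idInterior (p : ℤ) :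
    fibZ (p+4) + fibZ (p-4) = 4 * fibZ p + fibZ (p+2) + fibZ (p-2) := by
  have h1 := fibZ_rec (p-4) (p-3) (p-2) (by ring) (by ring)
  have h2 := fibZ_rec (p-3) (p-2) (p-1) (by ring) (by ring)
  have h3 := fibZ_rec (p-2) (p-1) p (by ring) (by ring)
  have h4 := fibZ_rec (p-1) p (p+1) (by ring) (by ring)
  have h5 := fibZ_rec p (p+1) (p+2) (by ring) (by ring)
  have h6 := fibZ_rec (p+1) (p+2) (p+3) (by ring) (by ring)
  have h7 := fibZ_rec (p+2) (p+3) (p+4) (by ring) (by ring)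
  linarith

lemma idRow0 (q : ℤ) :
    2 * fibZ q + fibZ (q-2) - fibZ (q-4) = fibZ (q+1) + fibZ (q-1) := by
  have h1 := fibZ_rec (q-4) (q-3) (q-2) (by ring) (by ring)
  have h2 := fibZ_rec (q-3) (q-2) (q-1) (by ring) (by ring)
  have h3 := fibZ_rec (q-2) (q-1) q (by ring) (by ring)
  have h4 := fibZ_rec (q-1) q (q+1) (by ring) (by ring)
  linarith

lemma idRow1 (q : ℤ) :
    3 * fibZ (q-2) + fibZ q + fibZ (q-4) - fibZ (q-6) = fibZ (q+1) + fibZ (q-1) := by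
  have h1 := fibZ_rec (q-6) (q-5) (q-4) (by ring) (by ring)
  have h2 := fibZ_rec (q-5) (q-4) (q-3) (by ring) (by ring)
  have h3 := fibZ_rec (q-4) (q-3) (q-2) (by ring) (by ring)
  have h4 := fibZ_rec (q-3) (q-2) (q-1) (by ring) (by ring)
  have h5 := fibZ_rec (q-2) (q-1) q (by ring) (by ring)
  have h6 := fibZ_rec (q-1) q (q+1) (by ring) (by ring)
  linarith


lemma lucas_fib (k : ℕ) : lucas (k+1) = Nat.fib (k+2) + Nat.fib k := by
  induction k using Nat.strong_induction_on with
  | _ k ih =>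
    match k with
    | 0 => decide
    | 1 => decide
    | (k+2) =>
      rw [lucas, ih (k+1) (by omega), ih k (by omega)]
      have e1 := Nat.fib_add_two (n := k+2)
      have e2 := Nat.fib_add_two (n := k+1)
      have e3 := Nat.fib_add_two (n := k)
      ring_nf
      ring_nf at e1 e2 e3
      omega

lemma idRowLast (k : ℕ) :
    ((-1:ℤ))^(k+1) * (2 * fibZ (-2-(k:ℤ)) - fibZ (2-(k:ℤ)) + fibZ (-(k:ℤ)))
      = Nat.fib (k+3) + Nat.fib (k+1) := by
  induction k using Nat.strong_induction_on with
  | _ k ih =>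
    match k with
    | 0 => decide
    | 1 => decide
    | (k+2) =>
      have ih1 := ih k (by omega)
      have ih2 := ih (k+1) (by omega)
      have e1 := fibZ_rec (-2-((k:ℤ)+2)) (-2-((k:ℤ)+1)) (-2-(k:ℤ)) (by ring) (by ring)
      have e2 := fibZ_rec (2-((k:ℤ)+2)) (2-((k:ℤ)+1)) (2-(k:ℤ)) (by ring) (by ring)
      have e3 := fibZ_rec (-((k:ℤ)+2)) (-((k:ℤ)+1)) (-(k:ℤ)) (by ring) (by ring)
      have f1 : (Nat.fib (k+2+3) : ℤ) = (Nat.fib (k+1+3) : ℤ) + (Nat.fib (k+3) : ℤ) := by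
        have h : k+2+3 = (k+3)+2 := by omega
        have h2 : k+1+3 = (k+3)+1 := by omega
        rw [h, Nat.fib_add_two, h2]; push_cast; ring
      have f2 : (Nat.fib (k+2+1) : ℤ) = (Nat.fib (k+1+1) : ℤ) + (Nat.fib (k+1) : ℤ) := by
        have h : k+2+1 = (k+1)+2 := by omega
        have h2 : k+1+1 = (k+1)+1 := by omega
        rw [h, Nat.fib_add_two, h2]; push_cast; ring
      have f3 : (Nat.fib (k+2+1) : ℤ) = (Nat.fib (k+3) : ℤ) := by
        rw [show k+2+1 = k+3 from by omega]
      push_cast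
      push_cast at ih1 ih2
      linear_combination ih1 + ih2 - f1 - f2 + 2*f3 + 2*((-1:ℤ))^k*e1 - ((-1:ℤ))^k*e2 + ((-1:ℤ))^k*e3

lemma idRowPen (k : ℕ) :
    ((-1:ℤ))^(k+2) * (3 * fibZ (-1-(k:ℤ)) - fibZ (3-(k:ℤ)) + fibZ (1-(k:ℤ)) + fibZ (-3-(k:ℤ)))
      = Nat.fib (k+4) + Nat.fib (k+2) := by
  induction k using Nat.strong_induction_on with
  | _ k ih =>
    match k with
    | 0 => decide
    | 1 => decide
    | (k+2) =>
      have ih1 := ih k (by omega)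
      have ih2 := ih (k+1) (by omega)
      have e1 := fibZ_rec (-1-((k:ℤ)+2)) (-1-((k:ℤ)+1)) (-1-(k:ℤ)) (by ring) (by ring)
      have e2 := fibZ_rec (3-((k:ℤ)+2)) (3-((k:ℤ)+1)) (3-(k:ℤ)) (by ring) (by ring)
      have e3 := fibZ_rec (1-((k:ℤ)+2)) (1-((k:ℤ)+1)) (1-(k:ℤ)) (by ring) (by ring)
      have e4 := fibZ_rec (-3-((k:ℤ)+2)) (-3-((k:ℤ)+1)) (-3-(k:ℤ)) (by ring) (by ring)
      have f1 : (Nat.fib (k+2+4) : ℤ) = (Nat.fib (k+1+4) : ℤ) + (Nat.fib (k+4) : ℤ) := by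
        have h : k+2+4 = (k+4)+2 := by omega
        have h2 : k+1+4 = (k+4)+1 := by omega
        rw [h, Nat.fib_add_two, h2]; push_cast; ring
      have f2 : (Nat.fib (k+2+2) : ℤ) = (Nat.fib (k+1+2) : ℤ) + (Nat.fib (k+2) : ℤ) := by
        have h : k+2+2 = (k+2)+2 := by omega
        have h2 : k+1+2 = (k+2)+1 := by omega
        rw [h, Nat.fib_add_two, h2]; push_cast; ring
      have f3 : (Nat.fib (k+2+2) : ℤ) = (Nat.fib (k+4) : ℤ) := by
        rw [show k+2+2 = k+4 from by omega]
      push_cast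
      push_cast at ih1 ih2
      linear_combination ih1 + ih2 - f1 - f2 + 2*f3 - 3*((-1:ℤ))^k*e1 + ((-1:ℤ))^k*e2 - ((-1:ℤ))^k*e3 - ((-1:ℤ))^k*e4
open scoped Classical in
lemma lap_mulVec {n : ℕ} (G : SimpleGraph (Fin n)) (v : Fin n → ℝ) (a : Fin n) :
    (lap G).mulVec v a = ∑ c : Fin n, (if G.Adj a c then v a - v c else 0) := by
  classical
  simp only [lap, Matrix.mulVec, dotProduct, Matrix.of_apply]
  have h1 : ∀ b : Fin n,
      (if a = b then ∑ c : Fin n, (if G.Adj a c then (1:ℝ) else 0) else if G.Adj a b then -1 else 0) * v b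
      = (if a = b then (∑ c : Fin n, (if G.Adj a c then (1:ℝ) else 0)) * v a else 0)
        + (if G.Adj a b then -(v b) else 0) := by
    intro b
    by_cases hab : a = b
    · subst hab
      simp [G.irrefl]
    · by_cases hadj : G.Adj a b <;> simp [hab, hadj]
  rw [Finset.sum_congr rfl (fun b _ => h1 b), Finset.sum_add_distrib, Finset.sum_ite_eq]
  simp only [Finset.mem_univ, if_true]
  have h2 : ∀ c : Fin n, (if G.Adj a c then v a - v c else 0)
      = (if G.Adj a c then (1:ℝ) else 0) * v a + (if G.Adj a c then -(v c) else 0) := by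
    intro c
    by_cases hadj : G.Adj a c <;> simp [hadj]; ring
  rw [Finset.sum_congr rfl (fun c _ => h2 c), Finset.sum_add_distrib, ← Finset.sum_mul]

open scoped Classical in
lemma lap_ker {n : ℕ} (G : SimpleGraph (Fin n)) (w : Fin n → ℝ)
    (hw : (lap G).mulVec w = 0) : ∀ a c, G.Adj a c → w a = w c := by
  classical
  have hrow : ∀ a : Fin n, ∑ c : Fin n, (if G.Adj a c then w a - w c else 0) = 0 := by
    intro a
    rw [← lap_mulVec, hw]
    rfl
  have h1 : ∑ a : Fin n, ∑ c : Fin n, (if G.Adj a c then w a * (w a - w c) else 0) = 0 := by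
    refine Finset.sum_eq_zero fun a _ => ?_
    have : ∀ c : Fin n, (if G.Adj a c then w a * (w a - w c) else 0)
        = w a * (if G.Adj a c then w a - w c else 0) := by
      intro c; by_cases h : G.Adj a c <;> simp [h]
    rw [Finset.sum_congr rfl fun c _ => this c, ← Finset.mul_sum, hrow a, mul_zero]
  have h2 : ∑ a : Fin n, ∑ c : Fin n, (if G.Adj a c then w c * (w c - w a) else 0) = 0 := by
    rw [Finset.sum_comm]
    refine Eq.trans ?_ h1
    refine Finset.sum_congr rfl fun c _ => Finset.sum_congr rfl fun a _ => ?_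
    rw [G.adj_comm]
  have h3 : ∑ a : Fin n, ∑ c : Fin n, (if G.Adj a c then (w a - w c)^2 else 0) = 0 := by
    have : ∀ a c : Fin n, (if G.Adj a c then (w a - w c)^2 else 0)
        = (if G.Adj a c then w a * (w a - w c) else 0) + (if G.Adj a c then w c * (w c - w a) else 0) := by
      intro a c; by_cases h : G.Adj a c <;> simp [h]; ring
    calc ∑ a : Fin n, ∑ c : Fin n, (if G.Adj a c then (w a - w c)^2 else 0)
        = ∑ a : Fin n, (∑ c : Fin n, (if G.Adj a c then w a * (w a - w c) else 0)
            + ∑ c : Fin n, (if G.Adj a c then w c * (w c - w a) else 0)) := by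
          refine Finset.sum_congr rfl fun a _ => ?_
          rw [← Finset.sum_add_distrib]
          exact Finset.sum_congr rfl fun c _ => this a c
      _ = 0 := by rw [Finset.sum_add_distrib, h1, h2]; ring
  intro a c hac
  have hnn : ∀ a : Fin n, 0 ≤ ∑ c : Fin n, (if G.Adj a c then (w a - w c)^2 else 0) := by
    intro a
    refine Finset.sum_nonneg fun c _ => ?_
    by_cases h : G.Adj a c <;> simp [h]; positivity
  have houter := (Finset.sum_eq_zero_iff_of_nonneg (fun a _ => hnn a)).mp h3 a (Finset.mem_univ a)
  have hinner := (Finset.sum_eq_zero_iff_of_nonneg (fun c _ => by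
      by_cases h : G.Adj a c <;> simp [h]; positivity)).mp houter c (Finset.mem_univ c)
  rw [if_pos hac] at hinner
  have := sq_eq_zero_iff.mp hinner
  linarith

lemma sum_range_eq_finset (n : ℕ) (S : Finset ℕ) (hS : S ⊆ Finset.range n) (g : ℕ → ℝ)
    (h0 : ∀ i, i < n → i ∉ S → g i = 0) :
    ∑ i ∈ Finset.range n, g i = ∑ i ∈ S, g i :=
  (Finset.sum_subset hS (fun x hx hxs => h0 x (Finset.mem_range.mp hx) hxs)).symm

noncomputable def vvfun (n m : ℕ) : ℕ → ℝ := fun t =>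
  ((n:ℝ) - 1 - t)/5 +
    2 * ((Nat.fib (m+1) : ℝ) + (-1)^t * (fibZ ((m:ℤ) + 1 - 2*t) : ℝ)) / (5 * (lucas (m+1) : ℝ))

lemma lucas_cast_pos (j : ℕ) : (0:ℝ) < (lucas j : ℝ) := by exact_mod_cast lucas_pos j

lemma row_0 (n m : ℕ) (hm2 : n = m + 2) :
    2 * vvfun n m 0 - vvfun n m 1 - vvfun n m 2 = 1 := by
  have hL : (lucas (m+1) : ℝ) = (Nat.fib (m+2) : ℝ) + (Nat.fib m : ℝ) := by
    exact_mod_cast lucas_fib m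
  have hLpos := lucas_cast_pos (m+1)
  have h := idRow0 ((m:ℤ)+1)
  rw [show (m:ℤ)+1-2 = (m:ℤ)-1 from by ring, show (m:ℤ)+1-4 = (m:ℤ)-3 from by ring,
      show (m:ℤ)+1+1 = ((m+2:ℕ):ℤ) from by push_cast; ring, fibZ_natCast,
      show (m:ℤ)+1-1 = ((m:ℕ):ℤ) from by push_cast; ring, fibZ_natCast] at h
  have key : 2 * (fibZ ((m:ℤ)+1) : ℝ) + (fibZ ((m:ℤ)-1) : ℝ) - (fibZ ((m:ℤ)-3) : ℝ)
      = (Nat.fib (m+2) : ℝ) + (Nat.fib m : ℝ) := by exact_mod_cast h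
  simp only [vvfun]
  subst hm2
  push_cast
  norm_num
  rw [show (m:ℤ)+1-4 = (m:ℤ)-3 from by ring, show (m:ℤ)+1-2 = (m:ℤ)-1 from by ring]
  field_simp
  linear_combination (2 : ℝ) * key - 2 * hL

lemma row_1 (n m : ℕ) (hm2 : n = m + 2) :
    3 * vvfun n m 1 - vvfun n m 0 - vvfun n m 2 - vvfun n m 3 = 0 := by
  have hL : (lucas (m+1) : ℝ) = (Nat.fib (m+2) : ℝ) + (Nat.fib m : ℝ) := by
    exact_mod_cast lucas_fib m
  have hLpos := lucas_cast_pos (m+1)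
  have h := idRow1 ((m:ℤ)+1)
  rw [show (m:ℤ)+1-2 = (m:ℤ)-1 from by ring, show (m:ℤ)+1-4 = (m:ℤ)-3 from by ring,
      show (m:ℤ)+1-6 = (m:ℤ)-5 from by ring,
      show (m:ℤ)+1+1 = ((m+2:ℕ):ℤ) from by push_cast; ring, fibZ_natCast,
      show (m:ℤ)+1-1 = ((m:ℕ):ℤ) from by push_cast; ring, fibZ_natCast] at h
  have key : 3 * (fibZ ((m:ℤ)-1) : ℝ) + (fibZ ((m:ℤ)+1) : ℝ) + (fibZ ((m:ℤ)-3) : ℝ)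
      - (fibZ ((m:ℤ)-5) : ℝ) = (Nat.fib (m+2) : ℝ) + (Nat.fib m : ℝ) := by exact_mod_cast h
  simp only [vvfun]
  subst hm2
  push_cast
  norm_num
  rw [show (m:ℤ)+1-2 = (m:ℤ)-1 from by ring, show (m:ℤ)+1-4 = (m:ℤ)-3 from by ring,
      show (m:ℤ)+1-6 = (m:ℤ)-5 from by ring]
  field_simp
  linear_combination (-2 : ℝ) * key + 2 * hL

lemma row_int (n m b : ℕ) :
    4 * vvfun n m (b+2) - vvfun n m b - vvfun n m (b+1) - vvfun n m (b+3)
      - vvfun n m (b+4) = 0 := by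
  have hLpos := lucas_cast_pos (m+1)
  have h := idInterior ((m:ℤ)-3-2*(b:ℤ))
  rw [show (m:ℤ)-3-2*(b:ℤ)+4 = (m:ℤ)+1-2*(b:ℤ) from by ring,
      show (m:ℤ)-3-2*(b:ℤ)+2 = (m:ℤ)+1-2*((b:ℤ)+1) from by ring,
      show (m:ℤ)-3-2*(b:ℤ) = (m:ℤ)+1-2*((b:ℤ)+2) from by ring,
      show (m:ℤ)+1-2*((b:ℤ)+2)-2 = (m:ℤ)+1-2*((b:ℤ)+3) from by ring,
      show (m:ℤ)+1-2*((b:ℤ)+2)-4 = (m:ℤ)+1-2*((b:ℤ)+4) from by ring] at h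
  have key : (fibZ ((m:ℤ)+1-2*(b:ℤ)) : ℝ) + (fibZ ((m:ℤ)+1-2*((b:ℤ)+4)) : ℝ)
      = 4 * (fibZ ((m:ℤ)+1-2*((b:ℤ)+2)) : ℝ) + (fibZ ((m:ℤ)+1-2*((b:ℤ)+1)) : ℝ)
        + (fibZ ((m:ℤ)+1-2*((b:ℤ)+3)) : ℝ) := by exact_mod_cast h
  simp only [vvfun]
  push_cast
  field_simp
  linear_combination ((-1:ℝ))^b * (-2) * key

lemma row_last (k : ℕ) :
    2 * vvfun (k+3) (k+1) (k+2) - vvfun (k+3) (k+1) k - vvfun (k+3) (k+1) (k+1) = -1 := by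
  have hL : (lucas (k+2) : ℝ) = (Nat.fib (k+3) : ℝ) + (Nat.fib (k+1) : ℝ) := by
    exact_mod_cast lucas_fib (k+1)
  have hLpos := lucas_cast_pos (k+2)
  have h := idRowLast k
  have key : ((-1:ℝ))^(k+1) * (2 * (fibZ (-2-(k:ℤ)) : ℝ) - (fibZ (2-(k:ℤ)) : ℝ)
      + (fibZ (-(k:ℤ)) : ℝ)) = (Nat.fib (k+3) : ℝ) + (Nat.fib (k+1) : ℝ) := by
    exact_mod_cast h
  simp only [vvfun]
  push_cast
  norm_num
  rw [show (k:ℤ)+1+1-2*((k:ℤ)+2) = -2-(k:ℤ) from by ring,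
      show (k:ℤ)+1+1-2*(k:ℤ) = 2-(k:ℤ) from by ring,
      show (k:ℤ)+1+1-2*((k:ℤ)+1) = -(k:ℤ) from by ring]
  field_simp
  linear_combination (-2:ℝ) * key + 2 * hL

lemma row_pen (k : ℕ) :
    3 * vvfun (k+4) (k+2) (k+2) - vvfun (k+4) (k+2) k - vvfun (k+4) (k+2) (k+1)
      - vvfun (k+4) (k+2) (k+3) = 0 := by
  have hL : (lucas (k+3) : ℝ) = (Nat.fib (k+4) : ℝ) + (Nat.fib (k+2) : ℝ) := by
    exact_mod_cast lucas_fib (k+2)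
  have hLpos := lucas_cast_pos (k+3)
  have h := idRowPen k
  have key : ((-1:ℝ))^(k+2) * (3 * (fibZ (-1-(k:ℤ)) : ℝ) - (fibZ (3-(k:ℤ)) : ℝ)
      + (fibZ (1-(k:ℤ)) : ℝ) + (fibZ (-3-(k:ℤ)) : ℝ))
      = (Nat.fib (k+4) : ℝ) + (Nat.fib (k+2) : ℝ) := by
    exact_mod_cast h
  simp only [vvfun]
  push_cast
  norm_num
  rw [show (k:ℤ)+2+1-2*((k:ℤ)+2) = -1-(k:ℤ) from by ring,
      show (k:ℤ)+2+1-2*(k:ℤ) = 3-(k:ℤ) from by ring,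
      show (k:ℤ)+2+1-2*((k:ℤ)+1) = 1-(k:ℤ) from by ring,
      show (k:ℤ)+2+1-2*((k:ℤ)+3) = -3-(k:ℤ) from by ring]
  field_simp
  linear_combination (2:ℝ) * key - 2 * hL

lemma row_n3 :
    2 * vvfun 3 1 1 - vvfun 3 1 0 - vvfun 3 1 2 = 0 := by
  have h0 : fibZ 2 = 1 := by decide
  have h1 : fibZ 0 = 0 := by decide
  have h2 : fibZ (-2) = -1 := by decide
  have h3 : lucas 2 = 3 := by decide
  simp only [vvfun]
  norm_num [h3]
  rw [h0, h1, h2]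
  norm_num

lemma vv_ends (n m : ℕ) (hm2 : n = m + 2) :
    vvfun n m 0 - vvfun n m (n-1)
      = ((m:ℝ) + 1) / 5 + 4 * (Nat.fib (m + 1) : ℝ) / (5 * (lucas (m + 1) : ℝ)) := by
  subst hm2
  have hLpos := lucas_cast_pos (m+1)
  have h1' : fibZ ((m:ℤ)+1-2*((0:ℕ):ℤ)) = (Nat.fib (m+1) : ℤ) := by
    rw [show (m:ℤ)+1-2*((0:ℕ):ℤ) = ((m+1:ℕ):ℤ) from by push_cast; ring, fibZ_natCast]
  have h2' : fibZ ((m:ℤ)+1-2*((m+1:ℕ):ℤ)) = (-1)^(m+2) * (Nat.fib (m+1) : ℤ) := by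
    rw [show (m:ℤ)+1-2*((m+1:ℕ):ℤ) = -((m+1:ℕ):ℤ) from by push_cast; ring, fibZ_neg_natCast]
  have h1 : (fibZ ((m:ℤ)+1-2*((0:ℕ):ℤ)) : ℝ) = (Nat.fib (m+1) : ℝ) := by exact_mod_cast h1'
  have h2 : (fibZ ((m:ℤ)+1-2*((m+1:ℕ):ℤ)) : ℝ) = ((-1:ℝ))^(m+2) * (Nat.fib (m+1) : ℝ) := by
    exact_mod_cast h2'
  have hs2 : ((-1:ℝ))^(m*2) = 1 := by
    refine Even.neg_one_pow ?_
    exact ⟨m, by ring⟩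
  simp only [vvfun]
  rw [show m+2-1 = m+1 from by omega]
  push_cast at h1 h2 ⊢
  rw [h1, h2]
  field_simp
  linear_combination ((Nat.fib (m+1):ℝ) * 2) * hs2

/-- For the straight linear 2-tree on `n ≥ 3` vertices with `m = n - 2`,
the resistance distance between the extreme vertices `1` and `n` equals
`(m+1)/5 + 4 F_{m+1} / (5 L_{m+1})`. -/
theorem stmt3 (n : ℕ) (hn : 3 ≤ n) (m : ℕ) (hm : m = n - 2) :
    IsResistance (linear2Tree n) ⟨0, by omega⟩ ⟨n - 1, by omega⟩
      (((m : ℝ) + 1) / 5 + 4 * (Nat.fib (m + 1) : ℝ) / (5 * (lucas (m + 1) : ℝ))) := by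
  classical
  have hm2 : n = m + 2 := by omega
  set i : Fin n := ⟨0, by omega⟩ with hi
  set j : Fin n := ⟨n - 1, by omega⟩ with hj
  set v0 : Fin n → ℝ := fun t => vvfun n m t.val with hv0
  have hsolve : (lap (linear2Tree n)).mulVec v0 = esrc i j := by
    funext a
    rw [lap_mulVec]
    have hsum : (∑ c : Fin n, (if (linear2Tree n).Adj a c then v0 a - v0 c else 0))
        = ∑ x ∈ Finset.range n,
            (fun t => if a.val ≠ t ∧ a.val ≤ t + 2 ∧ t ≤ a.val + 2
              then vvfun n m a.val - vvfun n m t else 0) x := by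
      rw [← Fin.sum_univ_eq_sum_range]
      refine Finset.sum_congr rfl fun c _ => ?_
      refine if_congr ?_ rfl rfl
      constructor
      · rintro ⟨h1, h2, h3⟩
        exact ⟨fun hh => h1 (Fin.ext hh), h2, h3⟩
      · rintro ⟨h1, h2, h3⟩
        exact ⟨fun hh => h1 (congrArg Fin.val hh), h2, h3⟩
    rw [hsum]
    set g : ℕ → ℝ := fun t => if a.val ≠ t ∧ a.val ≤ t + 2 ∧ t ≤ a.val + 2
        then vvfun n m a.val - vvfun n m t else 0 with hg
    have hesrc : esrc i j a = (if a.val = 0 then (1:ℝ) else 0) - (if a.val = n-1 then (1:ℝ) else 0) := by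
      simp only [esrc, hi, hj, Fin.ext_iff]
    have hlt := a.isLt
    by_cases h0 : a.val = 0
    · rw [sum_range_eq_finset n {1, 2}
        (by intro x hx; simp only [Finset.mem_insert, Finset.mem_singleton] at hx
            rw [Finset.mem_range]; omega)
        g (by intro t ht hnt; simp only [Finset.mem_insert, Finset.mem_singleton] at hnt
              exact if_neg (by omega))]
      rw [Finset.sum_insert (by simp), Finset.sum_singleton]
      have g1 : g 1 = vvfun n m 0 - vvfun n m 1 := by
        simp only [hg]; rw [h0, if_pos (by omega)]
      have g2 : g 2 = vvfun n m 0 - vvfun n m 2 := by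
        simp only [hg]; rw [h0, if_pos (by omega)]
      rw [g1, g2, hesrc, if_pos h0, if_neg (by omega)]
      have := row_0 n m hm2
      linarith
    · by_cases hlast : a.val = n - 1
      · obtain ⟨k, hk1, hk2, hk3⟩ : ∃ k, n = k + 3 ∧ m = k + 1 ∧ a.val = k + 2 :=
          ⟨n - 3, by omega, by omega, by omega⟩
        rw [sum_range_eq_finset n {k, k+1}
          (by intro x hx; simp only [Finset.mem_insert, Finset.mem_singleton] at hx
              rw [Finset.mem_range]; omega)
          g (by intro t ht hnt; simp only [Finset.mem_insert, Finset.mem_singleton] at hnt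
                exact if_neg (by omega))]
        rw [Finset.sum_insert (by simp), Finset.sum_singleton]
        have g1 : g k = vvfun n m (k+2) - vvfun n m k := by
          simp only [hg]; rw [hk3, if_pos (by omega)]
        have g2 : g (k+1) = vvfun n m (k+2) - vvfun n m (k+1) := by
          simp only [hg]; rw [hk3, if_pos (by omega)]
        rw [g1, g2, hesrc, if_neg h0, if_pos hlast]
        rw [hk1, hk2]
        linarith [row_last k]
      · -- middle rows: esrc = 0
        rw [hesrc, if_neg h0, if_neg hlast]
        by_cases hint : 2 ≤ a.val ∧ a.val ≤ n - 3
        · obtain ⟨b, hb⟩ : ∃ b, a.val = b + 2 := ⟨a.val - 2, by omega⟩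
          rw [sum_range_eq_finset n {b, b+1, b+3, b+4}
            (by intro x hx
                simp only [Finset.mem_insert, Finset.mem_singleton] at hx
                rw [Finset.mem_range]; omega)
            g (by intro t ht hnt
                  simp only [Finset.mem_insert, Finset.mem_singleton] at hnt
                  exact if_neg (by omega))]
          rw [Finset.sum_insert (by simp only [Finset.mem_insert, Finset.mem_singleton]; omega),
              Finset.sum_insert (by simp only [Finset.mem_insert, Finset.mem_singleton]; omega),
              Finset.sum_insert (by simp only [Finset.mem_singleton]; omega),
              Finset.sum_singleton]
          have g1 : g b = vvfun n m (b+2) - vvfun n m b := by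
            simp only [hg]; rw [hb, if_pos (by omega)]
          have g2 : g (b+1) = vvfun n m (b+2) - vvfun n m (b+1) := by
            simp only [hg]; rw [hb, if_pos (by omega)]
          have g3 : g (b+3) = vvfun n m (b+2) - vvfun n m (b+3) := by
            simp only [hg]; rw [hb, if_pos (by omega)]
          have g4 : g (b+4) = vvfun n m (b+2) - vvfun n m (b+4) := by
            simp only [hg]; rw [hb, if_pos (by omega)]
          rw [g1, g2, g3, g4]
          have := row_int n m b
          linarith
        · by_cases hone : a.val = 1
          · by_cases hn3 : n = 3
            · rw [sum_range_eq_finset n {0, 2}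
                (by intro x hx; simp only [Finset.mem_insert, Finset.mem_singleton] at hx
                    rw [Finset.mem_range]; omega)
                g (by intro t ht hnt
                      simp only [Finset.mem_insert, Finset.mem_singleton] at hnt
                      exact if_neg (by omega))]
              rw [Finset.sum_insert (by simp), Finset.sum_singleton]
              have g1 : g 0 = vvfun n m 1 - vvfun n m 0 := by
                simp only [hg]; rw [hone, if_pos (by omega)]
              have g2 : g 2 = vvfun n m 1 - vvfun n m 2 := by
                simp only [hg]; rw [hone, if_pos (by omega)]
              rw [g1, g2]
              have hm1 : m = 1 := by omega
              rw [hn3, hm1]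
              linarith [row_n3]
            · -- a = 1, n ≥ 4
              rw [sum_range_eq_finset n {0, 2, 3}
                (by intro x hx; simp only [Finset.mem_insert, Finset.mem_singleton] at hx
                    rw [Finset.mem_range]; omega)
                g (by intro t ht hnt
                      simp only [Finset.mem_insert, Finset.mem_singleton] at hnt
                      exact if_neg (by omega))]
              rw [Finset.sum_insert (by simp), Finset.sum_insert (by simp), Finset.sum_singleton]
              have g1 : g 0 = vvfun n m 1 - vvfun n m 0 := by
                simp only [hg]; rw [hone, if_pos (by omega)]
              have g2 : g 2 = vvfun n m 1 - vvfun n m 2 := by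
                simp only [hg]; rw [hone, if_pos (by omega)]
              have g3 : g 3 = vvfun n m 1 - vvfun n m 3 := by
                simp only [hg]; rw [hone, if_pos (by omega)]
              rw [g1, g2, g3]
              have := row_1 n m hm2
              linarith
          · -- a.val = n - 2, n ≥ 4
            obtain ⟨k, hk1, hk2, hk3⟩ : ∃ k, n = k + 4 ∧ m = k + 2 ∧ a.val = k + 2 :=
              ⟨n - 4, by omega, by omega, by omega⟩
            rw [sum_range_eq_finset n {k, k+1, k+3}
              (by intro x hx; simp only [Finset.mem_insert, Finset.mem_singleton] at hx
                  rw [Finset.mem_range]; omega)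
              g (by intro t ht hnt
                    simp only [Finset.mem_insert, Finset.mem_singleton] at hnt
                    exact if_neg (by omega))]
            rw [Finset.sum_insert (by simp only [Finset.mem_insert, Finset.mem_singleton]; omega),
                Finset.sum_insert (by simp only [Finset.mem_singleton]; omega),
                Finset.sum_singleton]
            have g1 : g k = vvfun n m (k+2) - vvfun n m k := by
              simp only [hg]; rw [hk3, if_pos (by omega)]
            have g2 : g (k+1) = vvfun n m (k+2) - vvfun n m (k+1) := by
              simp only [hg]; rw [hk3, if_pos (by omega)]
            have g3 : g (k+3) = vvfun n m (k+2) - vvfun n m (k+3) := by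
              simp only [hg]; rw [hk3, if_pos (by omega)]
            rw [g1, g2, g3]
            rw [hk1, hk2]
            linarith [row_pen k]
  constructor
  · exact ⟨v0, hsolve⟩
  · intro v hv
    have hker : (lap (linear2Tree n)).mulVec (v - v0) = 0 := by
      rw [Matrix.mulVec_sub, hv, hsolve, sub_self]
    have hconst := lap_ker (linear2Tree n) (v - v0) hker
    have hchain : ∀ k, ∀ hk : k < n, (v - v0) ⟨k, hk⟩ = (v - v0) ⟨0, by omega⟩ := by
      intro k
      induction k with
      | zero => intro hk; rfl
      | succ p ih =>
        intro hk
        have hp : p < n := by omega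
        have hadj : (linear2Tree n).Adj ⟨p+1, hk⟩ ⟨p, hp⟩ := by
          refine ⟨fun hh => ?_, show p+1 ≤ p+2 by omega, show p ≤ p+1+2 by omega⟩
          have := congrArg Fin.val hh
          simp at this
        exact (hconst _ _ hadj).trans (ih hp)
    have h1 := hchain (n-1) (by omega)
    have h2 : (v - v0) j = (v - v0) i := h1
    have h3 : v i - v j = v0 i - v0 j := by
      simp only [Pi.sub_apply] at h2
      linarith
    rw [h3]
    have := vv_ends n m hm2
    rw [hv0]
    simpa using this.symm
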